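/- arXiv:1901.05991 — 12 statements merged into one kernel-verified Lean document; each statement's English description precedes it below -/
import Mathlib

section
/- Let S₁ and S₂ be commutative semirings (possibly without unit) and let I be an ideal of the direct product semiring S₁ × S₂. Then I is directly decomposable (i.e., there exist an ideal I₁ of S₁ and an ideal I₂ of S₂ with I = I₁ × I₂) if and only if for every (a,b) ∈ I one has (a,0) ∈ I and (0,b) ∈ I. -/
/-- An ideal of a (possibly non-unital) commutative semiring: contains 0,
closed under addition, and closed under multiplication by arbitrary elements. -/
def IsSemiringIdeal {S : Type*} [NonUnitalCommSemiring S] (I : Set S) : Prop :=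
  (0 : S) ∈ I ∧ (∀ a b : S, a ∈ I → b ∈ I → a + b ∈ I) ∧ (∀ a s : S, a ∈ I → a * s ∈ I)

/-! The slices `{a | (a, 0) ∈ I}` and `{b | (0, b) ∈ I}` of an ideal `I` of `S₁ × S₂` are its
preimages under the non-unital ring homomorphisms `a ↦ (a, 0)` and `b ↦ (0, b)`, hence ideals.
When `I` contains `(a, 0)` and `(0, b)` with each `(a, b)`, their product is `I`, because
`(a, b) = (a, 0) + (0, b)`. -/

namespace NonUnitalRingHom

variable (S₁ S₂ : Type*) [NonUnitalNonAssocSemiring S₁] [NonUnitalNonAssocSemiring S₂]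

def inl : S₁ →ₙ+* S₁ × S₂ where
  toFun a := (a, 0)
  map_zero' := rfl
  map_add' a b := by simp
  map_mul' a b := by simp

def inr : S₂ →ₙ+* S₁ × S₂ where
  toFun b := (0, b)
  map_zero' := rfl
  map_add' a b := by simp
  map_mul' a b := by simp

@[simp]
theorem inl_apply (a : S₁) : inl S₁ S₂ a = (a, 0) := rfl

@[simp]
theorem inr_apply (b : S₂) : inr S₁ S₂ b = (0, b) := rfl

end NonUnitalRingHom

namespace IsSemiringIdeal

theorem zero_mem {S : Type*} [NonUnitalCommSemiring S] {I : Set S} (hI : IsSemiringIdeal I) :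
    (0 : S) ∈ I :=
  hI.1

theorem add_mem {S : Type*} [NonUnitalCommSemiring S] {I : Set S} (hI : IsSemiringIdeal I)
    {a b : S} (ha : a ∈ I) (hb : b ∈ I) : a + b ∈ I :=
  hI.2.1 a b ha hb

theorem preimage {S T : Type*} [NonUnitalCommSemiring S] [NonUnitalCommSemiring T] {I : Set T}
    (hI : IsSemiringIdeal I) (f : S →ₙ+* T) : IsSemiringIdeal (f ⁻¹' I) := by
  obtain ⟨h0, hadd, hmul⟩ := hI
  refine ⟨by simpa using h0, fun a b ha hb => ?_, fun a s ha => ?_⟩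
  · simpa using hadd _ _ ha hb
  · simpa using hmul _ (f s) ha

theorem eq_prod_preimage_inl_inr {S₁ S₂ : Type*} [NonUnitalCommSemiring S₁]
    [NonUnitalCommSemiring S₂] {I : Set (S₁ × S₂)} (hI : IsSemiringIdeal I)
    (h : ∀ a : S₁, ∀ b : S₂, (a, b) ∈ I → (a, (0 : S₂)) ∈ I ∧ ((0 : S₁), b) ∈ I) :
    I = (NonUnitalRingHom.inl S₁ S₂ ⁻¹' I) ×ˢ (NonUnitalRingHom.inr S₁ S₂ ⁻¹' I) := by
  ext ⟨a, b⟩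
  refine ⟨fun hab => h a b hab, fun ⟨ha, hb⟩ => ?_⟩
  simpa using hI.add_mem ha hb

end IsSemiringIdeal

theorem stmt_0 {S₁ S₂ : Type*} [NonUnitalCommSemiring S₁] [NonUnitalCommSemiring S₂]
    (I : Set (S₁ × S₂)) (hI : IsSemiringIdeal I) :
    (∃ I₁ : Set S₁, ∃ I₂ : Set S₂,
        IsSemiringIdeal I₁ ∧ IsSemiringIdeal I₂ ∧ I = I₁ ×ˢ I₂) ↔
      (∀ a : S₁, ∀ b : S₂, (a, b) ∈ I → (a, (0 : S₂)) ∈ I ∧ ((0 : S₁), b) ∈ I) := by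
  constructor
  · rintro ⟨I₁, I₂, hI₁, hI₂, rfl⟩ a b ⟨ha, hb⟩
    exact ⟨⟨ha, hI₂.zero_mem⟩, ⟨hI₁.zero_mem, hb⟩⟩
  · intro h
    exact ⟨_, _, hI.preimage _, hI.preimage _, hI.eq_prod_preimage_inl_inr h⟩
end

section
/- Let S₁ and S₂ be commutative semirings (possibly without unit) and let I be an ideal of S₁ × S₂. If I is directly decomposable (I = I₁ × I₂ for some ideals I₁ of S₁ and I₂ of S₂), then ((S₁ × {0}) + I) ∩ (({0} × S₂) + I) = I, where for a subset X and ideal I of S₁ × S₂, X + I denotes {x + i | x ∈ X, i ∈ I}. -/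
open Pointwise

/- Since `(univ ×ˢ {0}) + (s ×ˢ t) = (univ + s) ×ˢ t` and `s ⊆ univ + s`, intersecting with the
symmetric set cuts each factor back down to `s` and `t`. -/
theorem Set.univ_prod_zero_add_prod_inter_zero_prod_univ_add_prod {M N : Type*}
    [AddZeroClass M] [AddZeroClass N] (s : Set M) (t : Set N) :
    ((Set.univ ×ˢ {0}) + s ×ˢ t) ∩ (({0} ×ˢ Set.univ) + s ×ˢ t) = s ×ˢ t := by
  rw [prod_add_prod_comm, prod_add_prod_comm, singleton_zero, singleton_zero, zero_add, zero_add,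
    prod_inter_prod, inter_eq_right.mpr (subset_add_right s (mem_univ 0)),
    inter_eq_left.mpr (subset_add_right t (mem_univ 0))]

theorem stmt_1_general {S₁ S₂ : Type*} [NonUnitalCommSemiring S₁] [NonUnitalCommSemiring S₂]
    (I : Set (S₁ × S₂))
    (hdec : ∃ I₁ : Set S₁, ∃ I₂ : Set S₂,
        IsSemiringIdeal I₁ ∧ IsSemiringIdeal I₂ ∧ I = I₁ ×ˢ I₂) :
    (((Set.univ : Set S₁) ×ˢ ({0} : Set S₂)) + I) ∩
      ((({0} : Set S₁) ×ˢ (Set.univ : Set S₂)) + I) = I := by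
  obtain ⟨I₁, I₂, -, -, rfl⟩ := hdec
  exact Set.univ_prod_zero_add_prod_inter_zero_prod_univ_add_prod I₁ I₂

theorem stmt_1 {S₁ S₂ : Type*} [NonUnitalCommSemiring S₁] [NonUnitalCommSemiring S₂]
    (I : Set (S₁ × S₂)) (hI : IsSemiringIdeal I)
    (hdec : ∃ I₁ : Set S₁, ∃ I₂ : Set S₂,
        IsSemiringIdeal I₁ ∧ IsSemiringIdeal I₂ ∧ I = I₁ ×ˢ I₂) :
    (((Set.univ : Set S₁) ×ˢ ({0} : Set S₂)) + I) ∩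
      ((({0} : Set S₁) ×ˢ (Set.univ : Set S₂)) + I) = I :=
  stmt_1_general I hdec
end

section
/- Let R₁ and R₂ be commutative rings and let I be a semiring ideal of R₁ × R₂ (i.e., 0 ∈ I, I is closed under addition, and closed under multiplication by arbitrary elements). If (R₁ × {0}) ∩ (({0} × R₂) + I) ⊆ I and ((R₁ × {0}) + I) ∩ ({0} × R₂) ⊆ I, then for every (a,b) ∈ I one has (a,0) ∈ I and (0,b) ∈ I; hence I is directly decomposable. -/
/-!
Writing `(a, 0) = (0, -b) + (a, b)` and `(0, b) = (-a, 0) + (a, b)` puts `(a, 0)` and `(0, b)` in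
the two sets that the hypotheses place inside `I`, for every `(a, b) ∈ I`. An ideal
that contains the components of each of its elements and is closed under addition is the product
of its two slices `{a | (a, 0) ∈ I}` and `{b | (0, b) ∈ I}`, and these slices are again ideals.
-/

open Pointwise

section

variable {R₁ R₂ : Type*}

theorem IsSemiringIdeal.inl_preimage [NonUnitalCommSemiring R₁] [NonUnitalCommSemiring R₂]
    {I : Set (R₁ × R₂)} (hI : IsSemiringIdeal I) :
    IsSemiringIdeal ((fun a => (a, (0 : R₂))) ⁻¹' I) :=
  ⟨hI.1, fun a b ha hb => by simpa using hI.2.1 _ _ ha hb,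
    fun a s ha => by simpa using hI.2.2 _ (s, 0) ha⟩

theorem IsSemiringIdeal.inr_preimage [NonUnitalCommSemiring R₁] [NonUnitalCommSemiring R₂]
    {I : Set (R₁ × R₂)} (hI : IsSemiringIdeal I) :
    IsSemiringIdeal ((fun b => ((0 : R₁), b)) ⁻¹' I) :=
  ⟨hI.1, fun a b ha hb => by simpa using hI.2.1 _ _ ha hb,
    fun a s ha => by simpa using hI.2.2 _ (0, s) ha⟩

variable [AddGroup R₁] [AddGroup R₂] {I : Set (R₁ × R₂)} {a : R₁} {b : R₂}

theorem mk_zero_mem_of_mk_mem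
    (h : (Set.univ ×ˢ {0}) ∩ (({0} ×ˢ Set.univ) + I) ⊆ I) (hab : (a, b) ∈ I) :
    (a, (0 : R₂)) ∈ I := by
  refine h ⟨⟨trivial, rfl⟩, ?_⟩
  have hsum : ((0 : R₁), -b) + (a, b) = (a, 0) := by simp
  exact hsum ▸ Set.add_mem_add ⟨rfl, trivial⟩ hab

theorem zero_mk_mem_of_mk_mem
    (h : ((Set.univ ×ˢ {0}) + I) ∩ ({0} ×ˢ Set.univ) ⊆ I) (hab : (a, b) ∈ I) :
    ((0 : R₁), b) ∈ I := by
  refine h ⟨?_, ⟨rfl, trivial⟩⟩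
  have hsum : (-a, (0 : R₂)) + (a, b) = (0, b) := by simp
  exact hsum ▸ Set.add_mem_add ⟨trivial, rfl⟩ hab

theorem eq_prod_preimage_of_forall_mem (hadd : ∀ x y, x ∈ I → y ∈ I → x + y ∈ I)
    (hsplit : ∀ a b, (a, b) ∈ I → (a, (0 : R₂)) ∈ I ∧ ((0 : R₁), b) ∈ I) :
    I = ((fun a => (a, (0 : R₂))) ⁻¹' I) ×ˢ ((fun b => ((0 : R₁), b)) ⁻¹' I) := by
  ext ⟨a, b⟩
  refine ⟨hsplit a b, fun ⟨ha, hb⟩ => ?_⟩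
  simpa using hadd _ _ ha hb

end

theorem stmt_3 {R₁ R₂ : Type*} [CommRing R₁] [CommRing R₂]
    (I : Set (R₁ × R₂)) (hI : IsSemiringIdeal I)
    (h₁ : ((Set.univ : Set R₁) ×ˢ ({0} : Set R₂)) ∩
        ((({0} : Set R₁) ×ˢ (Set.univ : Set R₂)) + I) ⊆ I)
    (h₂ : (((Set.univ : Set R₁) ×ˢ ({0} : Set R₂)) + I) ∩
        (({0} : Set R₁) ×ˢ (Set.univ : Set R₂)) ⊆ I) :
    (∀ a : R₁, ∀ b : R₂, (a, b) ∈ I → (a, (0 : R₂)) ∈ I ∧ ((0 : R₁), b) ∈ I) ∧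
      (∃ I₁ : Set R₁, ∃ I₂ : Set R₂,
        IsSemiringIdeal I₁ ∧ IsSemiringIdeal I₂ ∧ I = I₁ ×ˢ I₂) := by
  have hsplit : ∀ a : R₁, ∀ b : R₂, (a, b) ∈ I → (a, (0 : R₂)) ∈ I ∧ ((0 : R₁), b) ∈ I :=
    fun _ _ hab => ⟨mk_zero_mem_of_mk_mem h₁ hab, zero_mk_mem_of_mk_mem h₂ hab⟩
  exact ⟨hsplit, _, _, hI.inl_preimage, hI.inr_preimage,
    eq_prod_preimage_of_forall_mem hI.2.1 hsplit⟩
end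

section
/- Let S₁ and S₂ be unitary commutative semirings (commutative semirings with a multiplicative unit 1). Then every ideal of S₁ × S₂ is directly decomposable. -/
namespace IsSemiringIdeal

theorem image_of_surjective {R S : Type*} [NonUnitalCommSemiring R] [NonUnitalCommSemiring S]
    {I : Set R} (hI : IsSemiringIdeal I) (f : R →ₙ+* S) (hf : Function.Surjective f) :
    IsSemiringIdeal (f '' I) := by
  obtain ⟨h0, hadd, hmul⟩ := hI
  refine ⟨⟨0, h0, map_zero f⟩, ?_, ?_⟩
  · rintro _ _ ⟨x, hx, rfl⟩ ⟨y, hy, rfl⟩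
    exact ⟨x + y, hadd x y hx hy, map_add f x y⟩
  · rintro _ s ⟨x, hx, rfl⟩
    obtain ⟨r, rfl⟩ := hf s
    exact ⟨x * r, hmul x r hx, map_mul f x r⟩

variable {S₁ S₂ : Type*}

theorem image_fst [NonUnitalCommSemiring S₁] [NonUnitalCommSemiring S₂]
    {I : Set (S₁ × S₂)} (hI : IsSemiringIdeal I) : IsSemiringIdeal (Prod.fst '' I) :=
  hI.image_of_surjective (NonUnitalRingHom.fst S₁ S₂) Prod.fst_surjective

theorem image_snd [NonUnitalCommSemiring S₁] [NonUnitalCommSemiring S₂]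
    {I : Set (S₁ × S₂)} (hI : IsSemiringIdeal I) : IsSemiringIdeal (Prod.snd '' I) :=
  hI.image_of_surjective (NonUnitalRingHom.snd S₁ S₂) Prod.snd_surjective

theorem eq_image_fst_prod_image_snd [CommSemiring S₁] [CommSemiring S₂]
    {I : Set (S₁ × S₂)} (hI : IsSemiringIdeal I) : I = (Prod.fst '' I) ×ˢ (Prod.snd '' I) := by
  obtain ⟨-, hadd, hmul⟩ := hI
  refine Set.Subset.antisymm Set.subset_prod ?_
  rintro ⟨a, b⟩ ⟨⟨⟨_, y⟩, hay, rfl⟩, ⟨⟨x, _⟩, hxb, rfl⟩⟩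
  simpa using hadd _ _ (hmul _ (1, 0) hay) (hmul _ (0, 1) hxb)

end IsSemiringIdeal

theorem stmt_4 {S₁ S₂ : Type*} [CommSemiring S₁] [CommSemiring S₂]
    (I : Set (S₁ × S₂)) (hI : IsSemiringIdeal I) :
    ∃ I₁ : Set S₁, ∃ I₂ : Set S₂,
      IsSemiringIdeal I₁ ∧ IsSemiringIdeal I₂ ∧ I = I₁ ×ˢ I₂ :=
  ⟨_, _, hI.image_fst, hI.image_snd, hI.eq_image_fst_prod_image_snd⟩
end

section
/- Let S₁ be a unitary commutative semiring and S₂ an idempotent commutative semiring (i.e., x·x = x for all x ∈ S₂). Then every ideal of S₁ × S₂ is directly decomposable. -/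
/-!
Multiplying by `(1, 0)` and by `(0, b)` shows that `(a, b) ∈ I` forces `(a, 0) ∈ I` and,
since `b * b = b`, also `(0, b) ∈ I`; conversely `(a, b) = (a, 0) + (0, b)`. Hence `I` is the
product of its two slices `{a | (a, 0) ∈ I}` and `{b | (0, b) ∈ I}`, which are ideals.
-/

namespace IsSemiringIdeal

section Slices

variable {S₁ S₂ : Type*} [NonUnitalCommSemiring S₁] [NonUnitalCommSemiring S₂]
  {I : Set (S₁ × S₂)}

theorem fst_slice (hI : IsSemiringIdeal I) : IsSemiringIdeal {a : S₁ | (a, (0 : S₂)) ∈ I} := by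
  obtain ⟨h0, hadd, hmul⟩ := hI
  refine ⟨h0, fun a b ha hb => ?_, fun a s ha => ?_⟩
  · simpa using hadd _ _ ha hb
  · simpa using hmul _ (s, 0) ha

theorem snd_slice (hI : IsSemiringIdeal I) : IsSemiringIdeal {b : S₂ | ((0 : S₁), b) ∈ I} := by
  obtain ⟨h0, hadd, hmul⟩ := hI
  refine ⟨h0, fun a b ha hb => ?_, fun a s ha => ?_⟩
  · simpa using hadd _ _ ha hb
  · simpa using hmul _ (0, s) ha

theorem mk_mem_of_fst_mem_of_snd_mem (hI : IsSemiringIdeal I) {a : S₁} {b : S₂}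
    (ha : (a, 0) ∈ I) (hb : (0, b) ∈ I) : (a, b) ∈ I := by
  simpa using hI.2.1 _ _ ha hb

theorem snd_mem_of_mem (hidem : ∀ x : S₂, x * x = x) (hI : IsSemiringIdeal I) {a : S₁} {b : S₂}
    (hab : (a, b) ∈ I) : ((0 : S₁), b) ∈ I := by
  simpa [hidem b] using hI.2.2 _ (0, b) hab

end Slices

theorem fst_mem_of_mem {S₁ S₂ : Type*} [CommSemiring S₁] [NonUnitalCommSemiring S₂]
    {I : Set (S₁ × S₂)} (hI : IsSemiringIdeal I) {a : S₁} {b : S₂} (hab : (a, b) ∈ I) :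
    (a, (0 : S₂)) ∈ I := by
  simpa using hI.2.2 _ (1, 0) hab

end IsSemiringIdeal

theorem stmt_5 {S₁ S₂ : Type*} [CommSemiring S₁] [NonUnitalCommSemiring S₂]
    (hidem : ∀ x : S₂, x * x = x)
    (I : Set (S₁ × S₂)) (hI : IsSemiringIdeal I) :
    ∃ I₁ : Set S₁, ∃ I₂ : Set S₂,
      IsSemiringIdeal I₁ ∧ IsSemiringIdeal I₂ ∧ I = I₁ ×ˢ I₂ := by
  refine ⟨_, _, hI.fst_slice, hI.snd_slice, Set.ext fun ⟨a, b⟩ => ⟨fun hab => ?_, fun hab => ?_⟩⟩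
  · exact ⟨hI.fst_mem_of_mem hab, hI.snd_mem_of_mem hidem hab⟩
  · exact hI.mk_mem_of_fst_mem_of_snd_mem hab.1 hab.2
end

section
/- Let S be a commutative semiring (possibly without unit) and F a field. Then every ideal of S × F is directly decomposable; more precisely, each ideal I of S × F equals π₁(I) × {0} or π₁(I) × F, where π₁(I) denotes the image of I under the first projection. -/
/-!
An ideal `I` of `S × F` either lies in `S × {0}`, and then it is `π₁(I) × {0}`, or it contains
some `(a, b)` with `b ≠ 0`. In the second case multiplying by `(0, b⁻¹ c)` puts every `(0, c)`
into `I`, and adding these to the elements of `I` fills up every fibre, so `I = π₁(I) × F`.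
-/

section

variable {S T : Type*} [NonUnitalCommSemiring S]

theorem isSemiringIdeal_univ [NonUnitalCommSemiring T] : IsSemiringIdeal (Set.univ : Set T) :=
  ⟨trivial, fun _ _ _ _ => trivial, fun _ _ _ => trivial⟩

theorem isSemiringIdeal_zero [NonUnitalCommSemiring T] : IsSemiringIdeal ({0} : Set T) := by
  refine ⟨rfl, ?_, ?_⟩
  · rintro a b rfl rfl
    exact add_zero 0
  · rintro a s rfl
    exact zero_mul s

theorem IsSemiringIdeal.image_fst_s9 [NonUnitalCommSemiring T] {I : Set (S × T)}
    (hI : IsSemiringIdeal I) : IsSemiringIdeal (Prod.fst '' I) := by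
  obtain ⟨h0, hadd, hmul⟩ := hI
  refine ⟨⟨0, h0, rfl⟩, ?_, ?_⟩
  · rintro _ _ ⟨p, hp, rfl⟩ ⟨q, hq, rfl⟩
    exact ⟨p + q, hadd p q hp hq, rfl⟩
  · rintro _ s ⟨p, hp, rfl⟩
    exact ⟨p * (s, 0), hmul p _ hp, rfl⟩

omit [NonUnitalCommSemiring S] in
theorem Set.eq_image_fst_prod_zero [Zero T] {I : Set (S × T)} (hI : ∀ p ∈ I, p.2 = 0) :
    I = (Prod.fst '' I) ×ˢ ({0} : Set T) := by
  ext ⟨a, b⟩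
  constructor
  · intro h
    exact ⟨⟨_, h, rfl⟩, hI _ h⟩
  · rintro ⟨⟨⟨a, b'⟩, ha, rfl⟩, rfl : b = 0⟩
    rwa [← hI _ ha]

theorem IsSemiringIdeal.eq_image_fst_prod_univ [NonUnitalCommRing T] {I : Set (S × T)}
    (hI : IsSemiringIdeal I) (hfibre : ∀ c : T, ((0 : S), c) ∈ I) :
    I = (Prod.fst '' I) ×ˢ (Set.univ : Set T) := by
  ext ⟨a, b⟩
  constructor
  · intro h
    exact ⟨⟨_, h, rfl⟩, trivial⟩
  · rintro ⟨⟨⟨a, b'⟩, ha, rfl⟩, -⟩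
    simpa using hI.2.1 _ _ ha (hfibre (b - b'))

theorem IsSemiringIdeal.mk_zero_mem_of_mem_of_ne_zero {F : Type*} [Field F] {I : Set (S × F)}
    (hI : IsSemiringIdeal I) {a : S} {b : F} (hab : (a, b) ∈ I) (hb : b ≠ 0) (c : F) :
    ((0 : S), c) ∈ I := by
  simpa [mul_inv_cancel_left₀ hb] using hI.2.2 _ (0, b⁻¹ * c) hab

end

theorem stmt_9 {S F : Type*} [NonUnitalCommSemiring S] [Field F]
    (I : Set (S × F)) (hI : IsSemiringIdeal I) :
    (∃ I₁ : Set S, ∃ I₂ : Set F,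
        IsSemiringIdeal I₁ ∧ IsSemiringIdeal I₂ ∧ I = I₁ ×ˢ I₂) ∧
      (I = (Prod.fst '' I) ×ˢ ({0} : Set F) ∨
        I = (Prod.fst '' I) ×ˢ (Set.univ : Set F)) := by
  have hdichotomy : I = (Prod.fst '' I) ×ˢ ({0} : Set F) ∨
      I = (Prod.fst '' I) ×ˢ (Set.univ : Set F) := by
    by_cases hzero : ∀ p ∈ I, p.2 = 0
    · exact Or.inl (Set.eq_image_fst_prod_zero hzero)
    · push Not at hzero
      obtain ⟨⟨a, b⟩, hab, hb⟩ := hzero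
      exact Or.inr (hI.eq_image_fst_prod_univ (hI.mk_zero_mem_of_mem_of_ne_zero hab hb))
  refine ⟨?_, hdichotomy⟩
  rcases hdichotomy with h | h
  · exact ⟨_, _, hI.image_fst_s9, isSemiringIdeal_zero, h⟩
  · exact ⟨_, _, hI.image_fst_s9, isSemiringIdeal_univ, h⟩
end

section
/- Let S₁ and S₂ be commutative semirings (possibly without unit) and Θ a congruence on S₁ × S₂. Then the kernel [(0,0)]Θ is strongly directly decomposable, i.e., [(0,0)]Θ = {a ∈ S₁ | ∃ b c, (a,b) Θ (0,c)} × {e ∈ S₂ | ∃ d f, (d,e) Θ (f,0)}, if and only if for all a,d,f ∈ S₁ and b,c,e ∈ S₂: (a,b) Θ (0,c) and (d,e) Θ (f,0) together imply (a,e) Θ (0,0). -/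
/- The inclusion `⊆` always holds, since a pair `(x, y)` related to `(0, 0)` witnesses both
projections; so equality is the reverse inclusion, which is the right-hand side. -/
theorem setOf_rel_zero_eq_prod_iff {α β : Type*} [Zero α] [Zero β]
    (r : α × β → α × β → Prop) :
    ({x : α × β | r x (0, 0)} =
        {a : α | ∃ (b c : β), r (a, b) (0, c)} ×ˢ {e : β | ∃ (d f : α), r (d, e) (f, 0)}) ↔
      ∀ (a d f : α) (b c e : β), r (a, b) (0, c) → r (d, e) (f, 0) → r (a, e) (0, 0) := by
  refine ⟨fun h a d f b c e hab hde => ?_, fun h => ?_⟩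
  · have hae : (a, e) ∈ {x : α × β | r x (0, 0)} := h ▸ ⟨⟨b, c, hab⟩, ⟨d, f, hde⟩⟩
    exact hae
  · ext ⟨x, y⟩
    exact ⟨fun hxy => ⟨⟨y, 0, hxy⟩, ⟨x, 0, hxy⟩⟩,
      fun ⟨⟨b, c, hb⟩, ⟨d, f, hd⟩⟩ => h x d f b c y hb hd⟩

theorem stmt_10 {S₁ S₂ : Type*} [NonUnitalCommSemiring S₁] [NonUnitalCommSemiring S₂]
    (Θ : RingCon (S₁ × S₂)) :
    ({x : S₁ × S₂ | Θ x (0, 0)} =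
        {a : S₁ | ∃ (b c : S₂), Θ (a, b) (0, c)} ×ˢ
          {e : S₂ | ∃ (d f : S₁), Θ (d, e) (f, 0)}) ↔
      (∀ (a d f : S₁) (b c e : S₂),
        Θ (a, b) (0, c) → Θ (d, e) (f, 0) → Θ (a, e) (0, 0)) :=
  setOf_rel_zero_eq_prod_iff Θ
end

section
/- Let S₁ and S₂ be commutative semirings (possibly without unit), Θ a congruence on S₁ × S₂, and let Π₁ and Π₂ be the congruences on S₁ × S₂ defined by x Πᵢ y iff πᵢ(x) = πᵢ(y). If [(0,0)]((Θ ⊔ Π₁) ⊓ Π₂) ⊆ [(0,0)]Θ and [(0,0)]((Θ ⊔ Π₂) ⊓ Π₁) ⊆ [(0,0)]Θ, where ⊔ and ⊓ denote join and meet in the lattice of congruences on S₁ × S₂, then [(0,0)]Θ is strongly directly decomposable, i.e., [(0,0)]Θ = {a ∈ S₁ | ∃ b c, (a,b) Θ (0,c)} × {e ∈ S₂ | ∃ d f, (d,e) Θ (f,0)}. -/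
/-- The congruence `Π₁` on `S₁ × S₂` identifying pairs with equal first components. -/
def projRingCon₁ (S₁ S₂ : Type*) [NonUnitalCommSemiring S₁] [NonUnitalCommSemiring S₂] :
    RingCon (S₁ × S₂) where
  r x y := x.1 = y.1
  iseqv := ⟨fun _ => rfl, Eq.symm, Eq.trans⟩
  mul' {a b c d} h₁ h₂ := by
    show (a * c).1 = (b * d).1
    simp only [Prod.fst_mul]
    rw [show a.1 = b.1 from h₁, show c.1 = d.1 from h₂]
  add' {a b c d} h₁ h₂ := by
    show (a + c).1 = (b + d).1
    simp only [Prod.fst_add]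
    rw [show a.1 = b.1 from h₁, show c.1 = d.1 from h₂]

/-- The congruence `Π₂` on `S₁ × S₂` identifying pairs with equal second components. -/
def projRingCon₂ (S₁ S₂ : Type*) [NonUnitalCommSemiring S₁] [NonUnitalCommSemiring S₂] :
    RingCon (S₁ × S₂) where
  r x y := x.2 = y.2
  iseqv := ⟨fun _ => rfl, Eq.symm, Eq.trans⟩
  mul' {a b c d} h₁ h₂ := by
    show (a * c).2 = (b * d).2
    simp only [Prod.snd_mul]
    rw [show a.2 = b.2 from h₁, show c.2 = d.2 from h₂]
  add' {a b c d} h₁ h₂ := by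
    show (a + c).2 = (b + d).2
    simp only [Prod.snd_add]
    rw [show a.2 = b.2 from h₁, show c.2 = d.2 from h₂]

/-! If `(a, b) Θ (0, c)`, then `(a, 0) Π₁ (a, b) Θ (0, c) Π₁ (0, 0)` and `(a, 0) Π₂ (0, 0)`, so the
first hypothesis puts `(a, 0)` in the kernel of `Θ`; symmetrically `(0, e)` lies in it, and so
does their sum `(a, e)`. -/

section

variable {S₁ S₂ : Type*} [NonUnitalCommSemiring S₁] [NonUnitalCommSemiring S₂]
  {Θ : RingCon (S₁ × S₂)}

theorem sup_projRingCon₁_rel_of_rel {x y : S₁ × S₂} (h : Θ x y) (b c : S₂) :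
    (Θ ⊔ projRingCon₁ S₁ S₂) (x.1, b) (y.1, c) :=
  have proj : ∀ {p q : S₁ × S₂}, p.1 = q.1 → (Θ ⊔ projRingCon₁ S₁ S₂) p q :=
    fun hpq => RingCon.le_def.mp le_sup_right hpq
  have hsup : (Θ ⊔ projRingCon₁ S₁ S₂) x y := RingCon.le_def.mp le_sup_left h
  RingCon.trans _ (RingCon.trans _ (proj (q := x) rfl) hsup) (proj (p := y) rfl)

theorem sup_projRingCon₂_rel_of_rel {x y : S₁ × S₂} (h : Θ x y) (a c : S₁) :
    (Θ ⊔ projRingCon₂ S₁ S₂) (a, x.2) (c, y.2) :=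
  have proj : ∀ {p q : S₁ × S₂}, p.2 = q.2 → (Θ ⊔ projRingCon₂ S₁ S₂) p q :=
    fun hpq => RingCon.le_def.mp le_sup_right hpq
  have hsup : (Θ ⊔ projRingCon₂ S₁ S₂) x y := RingCon.le_def.mp le_sup_left h
  RingCon.trans _ (RingCon.trans _ (proj (q := x) rfl) hsup) (proj (p := y) rfl)

theorem rel_fst_zero_of_rel
    (h₁ : {x : S₁ × S₂ | ((Θ ⊔ projRingCon₁ S₁ S₂) ⊓ projRingCon₂ S₁ S₂) x (0, 0)} ⊆
      {x : S₁ × S₂ | Θ x (0, 0)})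
    {a : S₁} {b c : S₂} (h : Θ (a, b) (0, c)) : Θ (a, 0) (0, 0) :=
  h₁ ⟨sup_projRingCon₁_rel_of_rel h 0 0, rfl⟩

theorem rel_snd_zero_of_rel
    (h₂ : {x : S₁ × S₂ | ((Θ ⊔ projRingCon₂ S₁ S₂) ⊓ projRingCon₁ S₁ S₂) x (0, 0)} ⊆
      {x : S₁ × S₂ | Θ x (0, 0)})
    {e : S₂} {d f : S₁} (h : Θ (d, e) (f, 0)) : Θ (0, e) (0, 0) :=
  h₂ ⟨sup_projRingCon₂_rel_of_rel h 0 0, rfl⟩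

end

theorem stmt_11 {S₁ S₂ : Type*} [NonUnitalCommSemiring S₁] [NonUnitalCommSemiring S₂]
    (Θ : RingCon (S₁ × S₂))
    (h₁ : {x : S₁ × S₂ | ((Θ ⊔ projRingCon₁ S₁ S₂) ⊓ projRingCon₂ S₁ S₂) x (0, 0)} ⊆
      {x : S₁ × S₂ | Θ x (0, 0)})
    (h₂ : {x : S₁ × S₂ | ((Θ ⊔ projRingCon₂ S₁ S₂) ⊓ projRingCon₁ S₁ S₂) x (0, 0)} ⊆
      {x : S₁ × S₂ | Θ x (0, 0)}) :
    {x : S₁ × S₂ | Θ x (0, 0)} =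
      {a : S₁ | ∃ (b c : S₂), Θ (a, b) (0, c)} ×ˢ
        {e : S₂ | ∃ (d f : S₁), Θ (d, e) (f, 0)} := by
  ext ⟨a, e⟩
  constructor
  · intro h
    exact ⟨⟨e, 0, h⟩, ⟨a, 0, h⟩⟩
  · rintro ⟨⟨b, c, hfst⟩, ⟨d, f, hsnd⟩⟩
    simpa using Θ.add (rel_fst_zero_of_rel h₁ hfst) (rel_snd_zero_of_rel h₂ hsnd)
end

section
/- Let S₁ and S₂ be commutative semirings (possibly without unit) such that S₁ × S₂ is distributive at (0,0), i.e., for all congruences Θ, Φ, Ψ on S₁ × S₂ one has [(0,0)]((Θ ⊔ Φ) ⊓ Ψ) = [(0,0)]((Θ ⊓ Ψ) ⊔ (Φ ⊓ Ψ)). Then for every congruence Θ on S₁ × S₂ the kernel [(0,0)]Θ is strongly directly decomposable, i.e., [(0,0)]Θ = {a ∈ S₁ | ∃ b c, (a,b) Θ (0,c)} × {e ∈ S₂ | ∃ d f, (d,e) Θ (f,0)}. -/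
/-!
The kernels `ρ₁, ρ₂` of the two projections of `S₁ × S₂` meet in the identity congruence.
If `(a, b) Θ (0, c)`, then `(a, 0)` lies in `[(0,0)]((Θ ⊔ ρ₁) ⊓ ρ₂)`, so distributivity at `(0,0)`
puts it into `[(0,0)]((Θ ⊓ ρ₂) ⊔ (ρ₁ ⊓ ρ₂)) = [(0,0)](Θ ⊓ ρ₂) ⊆ [(0,0)]Θ`. Symmetrically
`(0, e) Θ (0, 0)`, and adding the two relations gives `(a, e) Θ (0, 0)`.
-/

namespace RingCon

theorem rel_of_rel_sup_inf_of_inf_eq_bot {R : Type*} [Add R] [Mul R] {Θ Φ Ψ : RingCon R}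
    (hΦΨ : Φ ⊓ Ψ = ⊥) {x z : R}
    (hdist : {y | ((Θ ⊔ Φ) ⊓ Ψ) y z} = {y | ((Θ ⊓ Ψ) ⊔ (Φ ⊓ Ψ)) y z})
    (h : ((Θ ⊔ Φ) ⊓ Ψ) x z) : Θ x z := by
  have hx : ((Θ ⊓ Ψ) ⊔ (Φ ⊓ Ψ)) x z := (Set.ext_iff.mp hdist x).mp h
  rw [hΦΨ, sup_bot_eq] at hx
  exact (inf_le_left : Θ ⊓ Ψ ≤ Θ) hx

section Prod

variable {S₁ S₂ : Type*} [NonUnitalNonAssocSemiring S₁] [NonUnitalNonAssocSemiring S₂]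

def kerFst : RingCon (S₁ × S₂) := (⊥ : RingCon S₁).comap (NonUnitalRingHom.fst S₁ S₂)

def kerSnd : RingCon (S₁ × S₂) := (⊥ : RingCon S₂).comap (NonUnitalRingHom.snd S₁ S₂)

@[simp]
theorem kerFst_apply {x y : S₁ × S₂} : kerFst x y ↔ x.1 = y.1 := Iff.rfl

@[simp]
theorem kerSnd_apply {x y : S₁ × S₂} : kerSnd x y ↔ x.2 = y.2 := Iff.rfl

theorem kerFst_inf_kerSnd : (kerFst : RingCon (S₁ × S₂)) ⊓ kerSnd = ⊥ :=
  ext fun _ _ => by simp [inf_iff_and, Prod.ext_iff]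

theorem kerSnd_inf_kerFst : (kerSnd : RingCon (S₁ × S₂)) ⊓ kerFst = ⊥ := by
  rw [inf_comm, kerFst_inf_kerSnd]

variable {Θ : RingCon (S₁ × S₂)}

theorem mk_zero_rel_zero_of_rel
    (hdist : {x | ((Θ ⊔ kerFst) ⊓ kerSnd) x (0, 0)} =
      {x | ((Θ ⊓ kerSnd) ⊔ (kerFst ⊓ kerSnd)) x (0, 0)})
    {a : S₁} {b c : S₂} (h : Θ (a, b) (0, c)) : Θ (a, 0) (0, 0) := by
  refine rel_of_rel_sup_inf_of_inf_eq_bot kerFst_inf_kerSnd hdist ⟨?_, rfl⟩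
  have hb : (Θ ⊔ kerFst) (a, 0) (a, b) := le_sup_right (α := RingCon _) (kerFst_apply.2 rfl)
  have hc : (Θ ⊔ kerFst) (0, c) (0, 0) := le_sup_right (α := RingCon _) (kerFst_apply.2 rfl)
  exact (Θ ⊔ kerFst).trans hb ((Θ ⊔ kerFst).trans (le_sup_left (α := RingCon _) h) hc)

theorem zero_mk_rel_zero_of_rel
    (hdist : {x | ((Θ ⊔ kerSnd) ⊓ kerFst) x (0, 0)} =
      {x | ((Θ ⊓ kerFst) ⊔ (kerSnd ⊓ kerFst)) x (0, 0)})
    {e : S₂} {d f : S₁} (h : Θ (d, e) (f, 0)) : Θ (0, e) (0, 0) := by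
  refine rel_of_rel_sup_inf_of_inf_eq_bot kerSnd_inf_kerFst hdist ⟨?_, rfl⟩
  have hd : (Θ ⊔ kerSnd) (0, e) (d, e) := le_sup_right (α := RingCon _) (kerSnd_apply.2 rfl)
  have hf : (Θ ⊔ kerSnd) (f, 0) (0, 0) := le_sup_right (α := RingCon _) (kerSnd_apply.2 rfl)
  exact (Θ ⊔ kerSnd).trans hd ((Θ ⊔ kerSnd).trans (le_sup_left (α := RingCon _) h) hf)

end Prod

end RingCon

open RingCon in
theorem stmt_12 {S₁ S₂ : Type*} [NonUnitalCommSemiring S₁] [NonUnitalCommSemiring S₂]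
    (hdistrib : ∀ Θ Φ Ψ : RingCon (S₁ × S₂),
      {x : S₁ × S₂ | ((Θ ⊔ Φ) ⊓ Ψ) x (0, 0)} =
        {x : S₁ × S₂ | ((Θ ⊓ Ψ) ⊔ (Φ ⊓ Ψ)) x (0, 0)}) :
    ∀ Θ : RingCon (S₁ × S₂),
      {x : S₁ × S₂ | Θ x (0, 0)} =
        {a : S₁ | ∃ (b c : S₂), Θ (a, b) (0, c)} ×ˢ
          {e : S₂ | ∃ (d f : S₁), Θ (d, e) (f, 0)} := by
  intro Θ
  ext ⟨a, e⟩
  simp only [Set.mem_ofPred_eq, Set.mem_prod]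
  constructor
  · exact fun h => ⟨⟨e, 0, h⟩, ⟨a, 0, h⟩⟩
  · rintro ⟨⟨b, c, hbc⟩, ⟨d, f, hdf⟩⟩
    simpa using Θ.add (mk_zero_rel_zero_of_rel (hdistrib _ _ _) hbc)
      (zero_mk_rel_zero_of_rel (hdistrib _ _ _) hdf)
end

section
/- Every idempotent commutative semiring S (i.e., x·x = x for all x) is distributive at 0: for all congruences Θ, Φ, Ψ on S one has [0]((Θ ⊔ Φ) ⊓ Ψ) = [0]((Θ ⊓ Ψ) ⊔ (Φ ⊓ Ψ)). -/
/-!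
Fix `x` with `Ψ x 0`. Then `Ψ (a * x) (b * x)` for all `a, b`, since `c * x` is `Ψ`-related
to `c * 0 = 0`. When `x` is idempotent, `a ↦ a * x` is a semiring endomorphism, so pulling
`(Θ ⊓ Ψ) ⊔ (Φ ⊓ Ψ)` back along it gives a congruence containing `Θ` and `Φ`, hence `Θ ⊔ Φ`.
Applied to the pair `(x, 0)` this turns `(Θ ⊔ Φ) x 0` into `((Θ ⊓ Ψ) ⊔ (Φ ⊓ Ψ)) (x * x) (0 * x)`.
-/

section

variable {S : Type*} [NonUnitalCommSemiring S]

@[simps]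
def IsIdempotentElem.mulRightHom {e : S} (he : IsIdempotentElem e) : S →ₙ+* S where
  toFun a := a * e
  map_mul' a b := by rw [mul_mul_mul_comm, he.eq]
  map_zero' := zero_mul e
  map_add' a b := add_mul a b e

namespace RingCon

theorem rel_mul_right_of_rel_zero {Ψ : RingCon S} {e : S} (he : Ψ e 0) (a b : S) :
    Ψ (a * e) (b * e) := by
  have rel_zero (c : S) : Ψ (c * e) 0 := by
    simpa only [mul_zero] using Ψ.mul (Ψ.refl c) he
  exact Ψ.trans (rel_zero a) (Ψ.symm (rel_zero b))

theorem le_comap_inf_mulRightHom (c : RingCon S) {Ψ : RingCon S} {e : S}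
    (he : IsIdempotentElem e) (hΨ : Ψ e 0) : c ≤ (c ⊓ Ψ).comap he.mulRightHom :=
  fun a b hab => inf_iff_and.mpr ⟨c.mul hab (c.refl e), rel_mul_right_of_rel_zero hΨ a b⟩

theorem sup_inf_rel_zero_of_isIdempotentElem (Θ Φ Ψ : RingCon S) {e : S}
    (he : IsIdempotentElem e) (h : ((Θ ⊔ Φ) ⊓ Ψ) e 0) : ((Θ ⊓ Ψ) ⊔ (Φ ⊓ Ψ)) e 0 := by
  obtain ⟨hΘΦ, hΨ⟩ := inf_iff_and.mp h
  have hle : Θ ⊔ Φ ≤ ((Θ ⊓ Ψ) ⊔ (Φ ⊓ Ψ)).comap he.mulRightHom :=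
    sup_le ((Θ.le_comap_inf_mulRightHom he hΨ).trans (comap_mono le_sup_left))
      ((Φ.le_comap_inf_mulRightHom he hΨ).trans (comap_mono le_sup_right))
  simpa only [comap_rel, IsIdempotentElem.mulRightHom_apply, he.eq, zero_mul] using hle hΘΦ

end RingCon

end

theorem stmt_13 {S : Type*} [NonUnitalCommSemiring S] (hidem : ∀ x : S, x * x = x) :
    ∀ Θ Φ Ψ : RingCon S,
      {x : S | ((Θ ⊔ Φ) ⊓ Ψ) x 0} = {x : S | ((Θ ⊓ Ψ) ⊔ (Φ ⊓ Ψ)) x 0} := by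
  intro Θ Φ Ψ
  ext x
  have hle : (Θ ⊓ Ψ) ⊔ (Φ ⊓ Ψ) ≤ (Θ ⊔ Φ) ⊓ Ψ :=
    sup_le (inf_le_inf_right Ψ le_sup_left) (inf_le_inf_right Ψ le_sup_right)
  exact ⟨Θ.sup_inf_rel_zero_of_isIdempotentElem Φ Ψ (hidem x), fun h => hle h⟩
end

section
/- Let S₁ and S₂ be idempotent commutative semirings (i.e., x·x = x for all x). Then for every congruence Θ on S₁ × S₂ the kernel [(0,0)]Θ is strongly directly decomposable, i.e., [(0,0)]Θ = {a ∈ S₁ | ∃ b c, (a,b) Θ (0,c)} × {e ∈ S₂ | ∃ d f, (d,e) Θ (f,0)}. -/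
/-!
Multiplying a relation `(a, b) Θ (0, c)` by `(a, 0)` gives `(a, 0) Θ (0, 0)` once `a` is
idempotent, and symmetrically `(0, e) Θ (0, 0)`; adding the two yields `(a, e) Θ (0, 0)`.
-/

namespace RingCon

variable {S₁ S₂ : Type*} [NonUnitalNonAssocSemiring S₁] [NonUnitalNonAssocSemiring S₂]
  (Θ : RingCon (S₁ × S₂))

theorem prod_mk_zero_rel_zero {a : S₁} (ha : a * a = a) {b c : S₂} (h : Θ (a, b) (0, c)) :
    Θ (a, 0) (0, 0) := by
  simpa only [Prod.mk_mul_mk, ha, mul_zero, zero_mul] using Θ.mul h (Θ.refl (a, 0))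

theorem prod_zero_mk_rel_zero {e : S₂} (he : e * e = e) {d f : S₁} (h : Θ (d, e) (f, 0)) :
    Θ (0, e) (0, 0) := by
  simpa only [Prod.mk_mul_mk, he, mul_zero, zero_mul] using Θ.mul h (Θ.refl (0, e))

end RingCon

theorem stmt_14 {S₁ S₂ : Type*} [NonUnitalCommSemiring S₁] [NonUnitalCommSemiring S₂]
    (hidem₁ : ∀ x : S₁, x * x = x) (hidem₂ : ∀ x : S₂, x * x = x)
    (Θ : RingCon (S₁ × S₂)) :
    {x : S₁ × S₂ | Θ x (0, 0)} =
      {a : S₁ | ∃ (b c : S₂), Θ (a, b) (0, c)} ×ˢ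
        {e : S₂ | ∃ (d f : S₁), Θ (d, e) (f, 0)} := by
  ext ⟨a, e⟩
  simp only [Set.mem_ofPred_eq, Set.mem_prod]
  constructor
  · intro h
    exact ⟨⟨e, 0, h⟩, ⟨a, 0, h⟩⟩
  · rintro ⟨⟨b, c, hfst⟩, ⟨d, f, hsnd⟩⟩
    have hsum := Θ.add (Θ.prod_mk_zero_rel_zero (hidem₁ a) hfst)
      (Θ.prod_zero_mk_rel_zero (hidem₂ e) hsnd)
    simpa only [Prod.mk_add_mk, add_zero, zero_add] using hsum
end

section
/- Let S₁ and S₂ be unitary commutative semirings (commutative semirings with multiplicative unit). Then for every congruence Θ on S₁ × S₂ the kernel [(0,0)]Θ is directly decomposable, i.e., [(0,0)]Θ = π₁([(0,0)]Θ) × π₂([(0,0)]Θ). -/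
namespace RingCon

variable {R S : Type*} [NonAssocSemiring R] [NonAssocSemiring S] (Θ : RingCon (R × S))

theorem rel_mk_fst_zero {a : R} {b : S} (h : Θ (a, b) (0, 0)) : Θ (a, 0) (0, 0) := by
  simpa only [Prod.mk_mul_mk, mul_one, mul_zero] using Θ.mul h (Θ.refl (1, 0))

theorem rel_mk_zero_snd {a : R} {b : S} (h : Θ (a, b) (0, 0)) : Θ (0, b) (0, 0) := by
  simpa only [Prod.mk_mul_mk, mul_one, mul_zero] using Θ.mul h (Θ.refl (0, 1))

/-- `(a, b) = (a, b') * (1, 0) + (a', b) * (0, 1)`, and each summand is related to `0`. -/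
theorem rel_mk_zero_zero_of_rel_of_rel {a a' : R} {b b' : S} (ha : Θ (a, b') (0, 0))
    (hb : Θ (a', b) (0, 0)) : Θ (a, b) (0, 0) := by
  simpa using Θ.add (Θ.rel_mk_fst_zero ha) (Θ.rel_mk_zero_snd hb)

end RingCon

theorem stmt_16 {S₁ S₂ : Type*} [CommSemiring S₁] [CommSemiring S₂]
    (Θ : RingCon (S₁ × S₂)) :
    {x : S₁ × S₂ | Θ x (0, 0)} =
      (Prod.fst '' {x : S₁ × S₂ | Θ x (0, 0)}) ×ˢ
        (Prod.snd '' {x : S₁ × S₂ | Θ x (0, 0)}) := by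
  refine Set.subset_prod.antisymm ?_
  rintro ⟨a, b⟩ ⟨⟨⟨_, b'⟩, ha, rfl⟩, ⟨⟨a', _⟩, hb, rfl⟩⟩
  exact Θ.rel_mk_zero_zero_of_rel_of_rel ha hb
end
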